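/- Let z₁ = (α₁, β₁, M₁) and z₂ = (α₂, β₂, M₂) be elements of K_{r,s}. Then z₁ − z₂ ∈ Λ if and only if (α₂ − β₂)·((α₁ − α₂) × (β₁ − β₂)) = 0, where × is the cross product on ℝ³. -/

import Mathlib

open Matrix

noncomputable section

/-- Vectors in ℝ³. -/
abbrev V3 := Fin 3 → ℝ
/-- 3×3 real matrices. -/
abbrev Mat3 := Matrix (Fin 3) (Fin 3) ℝ
/-- The state space Z = ℝ³ × ℝ³ × ℝ^{3×3}. -/
abbrev Z := V3 × V3 × Mat3

/-- Euclidean dot product on ℝ³. -/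
def dot3 (u v : V3) : ℝ := ∑ i, u i * v i
/-- Euclidean norm on ℝ³. -/
def norm3 (v : V3) : ℝ := Real.sqrt (dot3 v v)
/-- Outer (tensor) product u ⊗ v. -/
def outer (u v : V3) : Mat3 := Matrix.vecMulVec u v

/-- The constraint set K_{r,s}. -/
def Krs (r s p : ℝ) : Set Z :=
  {z | z.2.2 = outer z.1 z.2.1 + p • (1 : Mat3) ∧ norm3 z.1 = r ∧ norm3 z.2.1 = s}

/-- The wave cone Λ. -/
def waveCone : Set Z :=
  {z | ∃ (ξ : V3) (c : ℝ), ξ ≠ 0 ∧ z.2.2 *ᵥ ξ + c • z.1 = 0 ∧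
    z.2.2ᵀ *ᵥ ξ + c • z.2.1 = 0 ∧ dot3 z.1 ξ = 0 ∧ dot3 z.2.1 ξ = 0}

/-- M₀(z) = α⊗β − M + p·Id. -/
def M0 (p : ℝ) (z : Z) : Mat3 := outer z.1 z.2.1 - z.2.2 + p • (1 : Mat3)

/-- G(z) = √((r² − |α|²)(s² − |β|²)). -/
def Gfun (r s : ℝ) (z : Z) : ℝ :=
  Real.sqrt ((r ^ 2 - norm3 z.1 ^ 2) * (s ^ 2 - norm3 z.2.1 ^ 2))

/-- Iterated lamination sets K_{r,s}^{Λ,i}. -/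
def lamSet (r s p : ℝ) : ℕ → Set Z
  | 0 => Krs r s p
  | (i + 1) => {z | ∃ zb ∈ waveCone, ∃ t₁ t₂ : ℝ, t₁ ≤ 0 ∧ 0 ≤ t₂ ∧
      z + t₁ • zb ∈ lamSet r s p i ∧ z + t₂ • zb ∈ lamSet r s p i}

/-- Nuclear norm: trace of the PSD square root of AᵀA. -/
def nuclearNorm (A : Mat3) : ℝ :=
  ((Matrix.posSemidef_conjTranspose_mul_self A).1.eigenvectorUnitary.1 *
    Matrix.diagonal (fun i => Real.sqrt ((Matrix.posSemidef_conjTranspose_mul_self A).1.eigenvalues i)) *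
    (star (Matrix.posSemidef_conjTranspose_mul_self A).1.eigenvectorUnitary : Mat3)).trace

/-- f₀(A) = (A₂₃, A₃₁, A₁₂) (0-indexed: (A 1 2, A 2 0, A 0 1)). -/
def f0 (A : Mat3) : V3 := ![A 1 2, A 2 0, A 0 1]

/-- Frobenius norm of a matrix. -/
def frobNorm (A : Mat3) : ℝ := Real.sqrt (∑ i, ∑ j, A i j ^ 2)

/-- Λ-convexity of a set. -/
def LambdaConvex (S : Set Z) : Prop :=
  ∀ z₁ ∈ S, ∀ z₂ ∈ S, z₁ - z₂ ∈ waveCone →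
    ∀ t : ℝ, t ∈ Set.Icc (0 : ℝ) 1 → z₁ + t • (z₂ - z₁) ∈ S

/-- The Λ-convex hull of K_{r,s}: the intersection of all Λ-convex sets containing it. -/
def lambdaHull (r s p : ℝ) : Set Z := ⋂₀ {S : Set Z | LambdaConvex S ∧ Krs r s p ⊆ S}


lemma outer_mulVec (u v ξ : V3) : Matrix.vecMulVec u v *ᵥ ξ = (v ⬝ᵥ ξ) • u := by
  funext i
  simp [Matrix.mulVec, Matrix.vecMulVec_apply, dotProduct, Finset.sum_mul,
    Finset.mul_sum, mul_comm, mul_left_comm]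

lemma outer_transpose (u v : V3) : (Matrix.vecMulVec u v)ᵀ = Matrix.vecMulVec v u := by
  ext i j; simp [Matrix.vecMulVec_apply, mul_comm]

lemma exists_perp2 (u v : V3) : ∃ ξ : V3, ξ ≠ 0 ∧ u ⬝ᵥ ξ = 0 ∧ v ⬝ᵥ ξ = 0 := by
  have hdet : (Matrix.of ![u, v, 0] : Mat3).det = 0 :=
    Matrix.det_eq_zero_of_row_eq_zero 2 (fun j => rfl)
  obtain ⟨ξ, hξ, h0⟩ := (Matrix.exists_mulVec_eq_zero_iff).mpr hdet
  refine ⟨ξ, hξ, ?_, ?_⟩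
  · simpa [Matrix.mulVec, dotProduct] using congrFun h0 0
  · simpa [Matrix.mulVec, dotProduct] using congrFun h0 1

lemma exists_perp3_iff (w u v : V3) :
    (∃ ξ : V3, ξ ≠ 0 ∧ w ⬝ᵥ ξ = 0 ∧ u ⬝ᵥ ξ = 0 ∧ v ⬝ᵥ ξ = 0) ↔ w ⬝ᵥ (crossProduct u v) = 0 := by
  rw [show (w ⬝ᵥ (crossProduct u v)) = Matrix.det (Matrix.of ![w, u, v]) from triple_product_eq_det w u v]
  rw [← Matrix.exists_mulVec_eq_zero_iff]
  constructor
  · rintro ⟨ξ, hξ, h1, h2, h3⟩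
    refine ⟨ξ, hξ, ?_⟩
    funext i
    fin_cases i <;> simpa [Matrix.mulVec, dotProduct]
  · rintro ⟨ξ, hξ, h0⟩
    refine ⟨ξ, hξ, ?_, ?_, ?_⟩
    · simpa [Matrix.mulVec, dotProduct] using congrFun h0 0
    · simpa [Matrix.mulVec, dotProduct] using congrFun h0 1
    · simpa [Matrix.mulVec, dotProduct] using congrFun h0 2

theorem stmt11 (r s p : ℝ) (hr : 0 < r) (hs : 0 < s) (z₁ z₂ : Z)
    (h₁ : z₁ ∈ Krs r s p) (h₂ : z₂ ∈ Krs r s p) :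
    z₁ - z₂ ∈ waveCone ↔
      dot3 (z₂.1 - z₂.2.1) (crossProduct (z₁.1 - z₂.1) (z₁.2.1 - z₂.2.1)) = 0 := by
  obtain ⟨hM₁, -, -⟩ := h₁
  obtain ⟨hM₂, -, -⟩ := h₂
  set α₁ := z₁.1 with hA1
  set β₁ := z₁.2.1 with hB1
  set α₂ := z₂.1 with hA2
  set β₂ := z₂.2.1 with hB2
  have hd : ∀ u v : V3, dot3 u v = u ⬝ᵥ v := fun _ _ => rfl
  have h1 : (z₁ - z₂).1 = α₁ - α₂ := rfl
  have h2 : (z₁ - z₂).2.1 = β₁ - β₂ := rfl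
  have hM : (z₁ - z₂).2.2 = Matrix.vecMulVec α₁ β₁ - Matrix.vecMulVec α₂ β₂ := by
    show z₁.2.2 - z₂.2.2 = _
    rw [hM₁, hM₂]
    show outer α₁ β₁ + p • 1 - (outer α₂ β₂ + p • 1) = _
    rw [add_sub_add_right_eq_sub]; rfl
  -- reduce the wave cone membership
  have key : z₁ - z₂ ∈ waveCone ↔ ∃ (ξ : V3) (c : ℝ), ξ ≠ 0 ∧
      (β₂ ⬝ᵥ ξ + c) • (α₁ - α₂) = 0 ∧ (α₂ ⬝ᵥ ξ + c) • (β₁ - β₂) = 0 ∧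
      (α₁ - α₂) ⬝ᵥ ξ = 0 ∧ (β₁ - β₂) ⬝ᵥ ξ = 0 := by
    simp only [waveCone, Set.mem_setOf_eq, h1, h2, hM, hd]
    constructor
    · rintro ⟨ξ, c, hξ, e1, e2, e3, e4⟩
      have hb : β₁ ⬝ᵥ ξ = β₂ ⬝ᵥ ξ := by
        have := e4; rw [sub_dotProduct] at this; linarith
      have ha : α₁ ⬝ᵥ ξ = α₂ ⬝ᵥ ξ := by
        have := e3; rw [sub_dotProduct] at this; linarith
      refine ⟨ξ, c, hξ, ?_, ?_, e3, e4⟩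
      · rw [← e1, Matrix.sub_mulVec, outer_mulVec, outer_mulVec, hb]
        funext i; simp; ring
      · rw [← e2, Matrix.transpose_sub, outer_transpose, outer_transpose,
          Matrix.sub_mulVec, outer_mulVec, outer_mulVec, ha]
        funext i; simp; ring
    · rintro ⟨ξ, c, hξ, e1, e2, e3, e4⟩
      have hb : β₁ ⬝ᵥ ξ = β₂ ⬝ᵥ ξ := by
        have := e4; rw [sub_dotProduct] at this; linarith
      have ha : α₁ ⬝ᵥ ξ = α₂ ⬝ᵥ ξ := by
        have := e3; rw [sub_dotProduct] at this; linarith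
      refine ⟨ξ, c, hξ, ?_, ?_, e3, e4⟩
      · rw [Matrix.sub_mulVec, outer_mulVec, outer_mulVec, hb, ← e1]
        funext i; simp; ring
      · rw [Matrix.transpose_sub, outer_transpose, outer_transpose,
          Matrix.sub_mulVec, outer_mulVec, outer_mulVec, ha, ← e2]
        funext i; simp; ring
  rw [key, hd]
  by_cases hα : α₁ - α₂ = 0
  · refine iff_of_true ?_ ?_
    · obtain ⟨ξ, hξ, hp1, -⟩ := exists_perp2 (β₁ - β₂) 0
      refine ⟨ξ, -(α₂ ⬝ᵥ ξ), hξ, by rw [hα, smul_zero], by rw [add_neg_cancel, zero_smul],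
        by rw [hα, zero_dotProduct], hp1⟩
    · rw [hα]
      simp
  · by_cases hβ : β₁ - β₂ = 0
    · refine iff_of_true ?_ ?_
      · obtain ⟨ξ, hξ, hp1, -⟩ := exists_perp2 (α₁ - α₂) 0
        refine ⟨ξ, -(β₂ ⬝ᵥ ξ), hξ, by rw [add_neg_cancel, zero_smul], by rw [hβ, smul_zero],
          hp1, by rw [hβ, zero_dotProduct]⟩
      · rw [hβ]
        simp
    · rw [← exists_perp3_iff]
      constructor
      · rintro ⟨ξ, c, hξ, e1, e2, e3, e4⟩
        have hc1 : β₂ ⬝ᵥ ξ + c = 0 := by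
          rcases smul_eq_zero.mp e1 with h | h
          · exact h
          · exact absurd h hα
        have hc2 : α₂ ⬝ᵥ ξ + c = 0 := by
          rcases smul_eq_zero.mp e2 with h | h
          · exact h
          · exact absurd h hβ
        exact ⟨ξ, hξ, by rw [sub_dotProduct]; linarith, e3, e4⟩
      · rintro ⟨ξ, hξ, hw, hu, hv⟩
        refine ⟨ξ, -(α₂ ⬝ᵥ ξ), hξ, ?_, ?_, hu, hv⟩
        · have : β₂ ⬝ᵥ ξ = α₂ ⬝ᵥ ξ := by rw [sub_dotProduct] at hw; linarith
          rw [this, add_neg_cancel, zero_smul]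
        · rw [add_neg_cancel, zero_smul]
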